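/- arXiv:2602.19257 — 5 statements merged into one kernel-verified Lean document; each statement's English description precedes it below -/
import Mathlib

section
/- If β ≥ d and a solution of the fast subsystem with positive initial data satisfies v(t) → 0 as t → ∞, then also u(t) → 0 as t → ∞. -/
open Filter Topology

/-- If β ≥ d and a solution of the fast subsystem with positive initial data satisfies
v(t) → 0 as t → ∞, then also u(t) → 0 as t → ∞. -/
theorem u_tendsto_zero (β d : ℝ) (hd : 0 < d) (hβd : d ≤ β)
    (u v : ℝ → ℝ)
    (hu0 : 0 < u 0) (hv0 : 0 < v 0)
    (hu : ∀ t, 0 ≤ t → 0 < u t) (hv : ∀ t, 0 ≤ t → 0 < v t)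
    (hdu : ∀ t, 0 ≤ t → HasDerivAt u (-(β * u t * v t / (u t + v t))) t)
    (hdv : ∀ t, 0 ≤ t → HasDerivAt v (β * u t * v t / (u t + v t) - d * v t) t)
    (hvlim : Tendsto v atTop (𝓝 0)) :
    Tendsto u atTop (𝓝 0) := by
  set w : ℝ → ℝ := fun t => v t / u t with hw
  have hwd : ∀ t, 0 ≤ t → HasDerivAt w ((β - d) * w t) t := by
    intro t ht
    have hut := hu t ht
    have hvt := hv t ht
    have huv : u t + v t ≠ 0 := by positivity
    have h := (hdv t ht).div (hdu t ht) hut.ne'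
    have e : ((β * u t * v t / (u t + v t) - d * v t) * u t -
        v t * -(β * u t * v t / (u t + v t))) / u t ^ 2 = (β - d) * (v t / u t) := by
      rw [div_eq_iff (by positivity)]
      field_simp [hut.ne', huv]
      ring
    rw [e] at h
    exact h
  have hmono : MonotoneOn w (Set.Ici (0:ℝ)) := by
    apply monotoneOn_of_deriv_nonneg (convex_Ici 0)
    · intro t ht
      exact (hwd t ht).continuousAt.continuousWithinAt
    · intro t ht
      rw [interior_Ici] at ht
      exact (hwd t ht.le).differentiableAt.differentiableWithinAt
    · intro t ht
      rw [interior_Ici] at ht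
      rw [(hwd t ht.le).deriv]
      have := hv t ht.le
      have := hu t ht.le
      have : 0 < w t := by positivity
      nlinarith
  have hle : ∀ t, 0 ≤ t → u t ≤ (u 0 / v 0) * v t := by
    intro t ht
    have h1 : w 0 ≤ w t := hmono (Set.self_mem_Ici) ht ht
    have hut := hu t ht
    rw [hw] at h1
    simp only at h1
    rw [div_le_div_iff₀ hu0 hut] at h1
    rw [div_mul_eq_mul_div, le_div_iff₀ hv0]
    nlinarith
  have h0 : Tendsto (fun t => (u 0 / v 0) * v t) atTop (𝓝 0) := by
    simpa using hvlim.const_mul (u 0 / v 0)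
  apply squeeze_zero' ?_ ?_ h0
  · filter_upwards [eventually_ge_atTop (0:ℝ)] with t ht
    exact (hu t ht).le
  · filter_upwards [eventually_ge_atTop (0:ℝ)] with t ht
    exact hle t ht
end

section
/- Suppose α > 1 and β = d + εk with 1 < k < α*(ε) := α(1 − εθ/(d+ε))/(1 − αεθ/(d+ε)) (and 1 − αεθ/(d+ε) > 0). Then the point (u₂, v₂) with u₂ = ((d+ε)/β)·(1 − ((β−d)/(εα))·(1 − θ + θβ/(d+ε))^(−1)) and v₂ = u₂(β/(d+ε) − 1) is an equilibrium of the system u' = εα(u+θv)(1−u−v) − εu − βuv/(u+v), v' = βuv/(u+v) − dv − εv, and satisfies u₂ > 0, v₂ > 0, u₂ + v₂ < 1 (i.e., it lies in the interior of Δ). -/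
noncomputable def fEpi (α β θ ε : ℝ) (u v : ℝ) : ℝ :=
  ε * α * (u + θ * v) * (1 - u - v) - ε * u - β * u * v / (u + v)

noncomputable def gEpi (β d ε : ℝ) (u v : ℝ) : ℝ :=
  β * u * v / (u + v) - d * v - ε * v

/-- Existence of the endemic equilibrium: if α > 1 and β = d + εk with
1 < k < α* := α(1 − εθ/(d+ε))/(1 − αεθ/(d+ε)), then (u₂, v₂) as given is an
equilibrium lying in the interior of Δ. -/
theorem endemic_equilibrium_exists (α β θ d ε k : ℝ)
    (hα : 1 < α) (hd : 0 < d) (hε : 0 < ε)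
    (hθ0 : 0 ≤ θ) (hθ1 : θ ≤ 1)
    (hβ : β = d + ε * k)
    (hden : 0 < 1 - α * (ε * θ / (d + ε)))
    (hk1 : 1 < k)
    (hk2 : k < α * (1 - ε * θ / (d + ε)) / (1 - α * (ε * θ / (d + ε)))) :
    let u₂ := (d + ε) / β *
      (1 - (β - d) / (ε * α) * (1 - θ + θ * β / (d + ε))⁻¹)
    let v₂ := u₂ * (β / (d + ε) - 1)
    fEpi α β θ ε u₂ v₂ = 0 ∧ gEpi β d ε u₂ v₂ = 0 ∧
      0 < u₂ ∧ 0 < v₂ ∧ u₂ + v₂ < 1 := by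
  intro u₂ v₂
  have hα0 : (0:ℝ) < α := by linarith
  have hD : (0:ℝ) < d + ε := by linarith
  have hDne : (d + ε) ≠ 0 := ne_of_gt hD
  have hβD : d + ε < β := by rw [hβ]; nlinarith
  have hβ0 : (0:ℝ) < β := lt_trans hD hβD
  have hβne : β ≠ 0 := ne_of_gt hβ0
  have hβd : β - d = ε * k := by rw [hβ]; ring
  -- A := 1 - θ + θ*β/(d+ε) ≥ 1
  have hA1 : (1:ℝ) ≤ 1 - θ + θ * β / (d + ε) := by
    have h1 : (1:ℝ) ≤ β / (d + ε) := by
      rw [le_div_iff₀ hD]; linarith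
    have h2 : θ * 1 ≤ θ * (β / (d + ε)) := mul_le_mul_of_nonneg_left h1 hθ0
    rw [mul_div_assoc]
    linarith
  have hA0 : (0:ℝ) < 1 - θ + θ * β / (d + ε) := by linarith
  have hAne : (1 - θ + θ * β / (d + ε)) ≠ 0 := ne_of_gt hA0
  -- key inequality: k < α * A
  have hkA : k < α * (1 - θ + θ * β / (d + ε)) := by
    have h := (lt_div_iff₀ hden).mp hk2
    have h' := mul_lt_mul_of_pos_right h hD
    have e1 : k * α * (ε * θ / (d + ε) * (d + ε)) = k * α * (ε * θ) := by
      rw [div_mul_cancel₀ _ hDne]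
    have e2 : α * (ε * θ / (d + ε) * (d + ε)) = α * (ε * θ) := by
      rw [div_mul_cancel₀ _ hDne]
    have e3 : θ * β / (d + ε) * (d + ε) = θ * β := div_mul_cancel₀ _ hDne
    rw [show α * (1 - θ + θ * β / (d + ε)) = (α * ((1 - θ) * (d + ε) + θ * β / (d + ε) * (d + ε))) / (d + ε) by
      field_simp, lt_div_iff₀ hD, e3, hβ]
    nlinarith [h', e1, e2]
  -- P := (β-d)/(ε*α) * A⁻¹ equals k/(α*A)
  have hP : (β - d) / (ε * α) * (1 - θ + θ * β / (d + ε))⁻¹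
      = k / (α * (1 - θ + θ * β / (d + ε))) := by
    rw [hβd, mul_div_mul_left _ _ (ne_of_gt hε), ← div_eq_mul_inv, div_div]
  have hP0 : 0 < (β - d) / (ε * α) * (1 - θ + θ * β / (d + ε))⁻¹ := by
    rw [hP]
    exact div_pos (by linarith) (by positivity)
  have hP1 : (β - d) / (ε * α) * (1 - θ + θ * β / (d + ε))⁻¹ < 1 := by
    rw [hP, div_lt_one (by positivity)]
    exact hkA
  have hu₂eq : u₂ = (d + ε) / β *
      (1 - (β - d) / (ε * α) * (1 - θ + θ * β / (d + ε))⁻¹) := rfl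
  have hv₂eq : v₂ = u₂ * (β / (d + ε) - 1) := rfl
  clear_value v₂ u₂
  have hu₂ : 0 < u₂ := by
    rw [hu₂eq]
    exact mul_pos (div_pos hD hβ0) (by linarith)
  have hu₂ne : u₂ ≠ 0 := ne_of_gt hu₂
  have hv₂ : 0 < v₂ := by
    rw [hv₂eq]
    have h1 : 0 < β / (d + ε) - 1 := by
      rw [sub_pos, lt_div_iff₀ hD]; linarith
    exact mul_pos hu₂ h1
  have huv : u₂ + v₂ = u₂ * (β / (d + ε)) := by rw [hv₂eq]; ring
  have hcancel : ∀ x : ℝ, (d + ε) / β * x * (β / (d + ε)) = x := by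
    intro x
    field_simp
  have husum : u₂ + v₂
      = 1 - (β - d) / (ε * α) * (1 - θ + θ * β / (d + ε))⁻¹ := by
    rw [huv, hu₂eq, hcancel]
  have hsum1 : u₂ + v₂ < 1 := by rw [husum]; linarith
  have huvpos : 0 < u₂ + v₂ := by linarith
  have huvne : u₂ + v₂ ≠ 0 := ne_of_gt huvpos
  -- the infection term
  have hdiv : β * u₂ * v₂ / (u₂ + v₂) = (d + ε) * v₂ := by
    rw [huv]
    field_simp
  refine ⟨?_, ?_, hu₂, hv₂, hsum1⟩
  · show ε * α * (u₂ + θ * v₂) * (1 - u₂ - v₂) - ε * u₂ - β * u₂ * v₂ / (u₂ + v₂) = 0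
    rw [hdiv]
    have h1mu : 1 - u₂ - v₂ = k / (α * (1 - θ + θ * β / (d + ε))) := by
      have := husum; rw [hP] at this; linarith
    have hAform : u₂ + θ * v₂ = u₂ * (1 - θ + θ * β / (d + ε)) := by
      rw [hv₂eq]; ring
    have hterm1 : ε * α * (u₂ * (1 - θ + θ * β / (d + ε)))
        * (k / (α * (1 - θ + θ * β / (d + ε)))) = ε * k * u₂ := by
      have hc : k / (α * (1 - θ + θ * β / (d + ε)))
          * (α * (1 - θ + θ * β / (d + ε))) = k :=
        div_mul_cancel₀ _ (by positivity)
      calc ε * α * (u₂ * (1 - θ + θ * β / (d + ε)))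
          * (k / (α * (1 - θ + θ * β / (d + ε))))
          = ε * u₂ * (k / (α * (1 - θ + θ * β / (d + ε)))
            * (α * (1 - θ + θ * β / (d + ε)))) := by ring
        _ = ε * k * u₂ := by rw [hc]; ring
    have hterm2 : (d + ε) * v₂ = ε * (k - 1) * u₂ := by
      rw [hv₂eq, mul_comm (d + ε), mul_assoc, sub_mul, div_mul_cancel₀ _ hDne,
        one_mul, hβ]
      ring
    rw [h1mu, hAform, hterm1, hterm2]
    ring
  · show β * u₂ * v₂ / (u₂ + v₂) - d * v₂ - ε * v₂ = 0
    rw [hdiv]; ring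
end

section
/- In chart K₁ of the blow-up (coordinates r₁,u₁ with v = r₁, u = r₁u₁), the reduced flow on the sphere r₁ = 0 is u₁' = (1+u₁)(αεθ + (d−β+αε)u₁). Assuming β − d − αε > 0, the equilibrium u₁⁰ = εαθ/(β−d−αε) is nonnegative, and the Jacobian eigenvalues of the full 2D system at (r₁,u₁) = (0,u₁⁰) are λ_r = −(d+ε+(d+ε−β)u₁⁰) and λ_u = (1+u₁⁰)(d+αε−β); both are negative for ε sufficiently small. -/
/-- Chart K₁ desingularized vector field: r₁-component. -/
noncomputable def K1r (β d ε : ℝ) (r u : ℝ) : ℝ :=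
  -r * (d + ε + (d - β + ε) * u)

/-- Chart K₁ desingularized vector field: u₁-component. -/
noncomputable def K1u (α θ β d ε : ℝ) (r u : ℝ) : ℝ :=
  (1 + u) * (α * ε * θ + (d - β + α * ε) * u - α * ε * r * (1 + u) * (θ + u))

open Polynomial

lemma charpoly_tri (a c b : ℝ) :
    (!![a, 0; c, b]).charpoly = (X - C a) * (X - C b) := by
  rw [Matrix.charpoly, Matrix.det_fin_two]
  simp [Matrix.charmatrix_apply, Matrix.diagonal_apply]

/-- In chart K₁: the reduced flow on {r₁ = 0} is u₁' = (1+u₁)(αεθ + (d−β+αε)u₁);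
assuming β − d − αε > 0, u10 = εαθ/(β−d−αε) ≥ 0 and the Jacobian at (0,u10) has
eigenvalues λ_r = −(d+ε+(d+ε−β)u10) and λ_u = (1+u10)(d+αε−β), both negative for
ε sufficiently small. -/
theorem chartK1_equilibrium (α θ β d : ℝ)
    (hα : 0 < α) (hβ : 0 < β) (hd : 0 < d)
    (hθ0 : 0 ≤ θ) (hθ1 : θ ≤ 1) (hβd : d < β) :
    ∃ ε₀ > 0, ∀ ε : ℝ, 0 < ε → ε < ε₀ →
      0 < β - d - α * ε ∧
      (∀ r u : ℝ, r = 0 →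
        K1u α θ β d ε r u = (1 + u) * (α * ε * θ + (d - β + α * ε) * u)) ∧
      (let u10 := ε * α * θ / (β - d - α * ε)
       let lr := -(d + ε + (d + ε - β) * u10)
       let lu := (1 + u10) * (d + α * ε - β)
       0 ≤ u10 ∧
       (!![deriv (fun r => K1r β d ε r u10) 0,
           deriv (fun u => K1r β d ε 0 u) u10;
           deriv (fun r => K1u α θ β d ε r u10) 0,
           deriv (fun u => K1u α θ β d ε 0 u) u10]).charpoly
         = (X - C lr) * (X - C lu) ∧
       lr < 0 ∧ lu < 0) := by
  refine ⟨d * (β - d) / (2 * α * β), div_pos (by nlinarith) (by positivity), fun ε hε hεε₀ => ?_⟩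
  have hαε : α * ε < d * (β - d) / (2 * β) := by
    have := (mul_lt_mul_iff_right₀ hα).2 hεε₀
    calc α * ε < α * (d * (β - d) / (2 * α * β)) := this
    _ = d * (β - d) / (2 * β) := by field_simp
  have hhalf : d * (β - d) / (2 * β) ≤ (β - d) / 2 := by
    rw [div_le_div_iff₀ (by positivity) (by norm_num)]
    nlinarith
  have hpos : 0 < β - d - α * ε := by nlinarith
  refine ⟨hpos, fun r u hr => by simp [K1u, hr], ?_⟩
  intro u10 lr lu
  have hne : β - d - α * ε ≠ 0 := ne_of_gt hpos
  have hu10 : 0 ≤ u10 := by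
    show 0 ≤ ε * α * θ / (β - d - α * ε)
    exact div_nonneg (by positivity) hpos.le
  -- bound u10
  have hu10b : u10 * (β - d) ≤ 2 * (ε * α) := by
    show ε * α * θ / (β - d - α * ε) * (β - d) ≤ 2 * (ε * α)
    rw [div_mul_eq_mul_div, div_le_iff₀ hpos]
    have hθ : ε * α * θ ≤ ε * α := by
      nlinarith [mul_nonneg (mul_pos hε hα).le (sub_nonneg.2 hθ1)]
    nlinarith [mul_pos hε hα]
  -- equilibrium identity
  have hEq : α * ε * θ + (d - β + α * ε) * u10 = 0 := by
    show α * ε * θ + (d - β + α * ε) * (ε * α * θ / (β - d - α * ε)) = 0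
    field_simp
    ring
  -- derivatives
  have h00 : deriv (fun r => K1r β d ε r u10) 0 = lr := by
    have h : HasDerivAt (fun r : ℝ => -r * (d + ε + (d - β + ε) * u10))
        (-1 * (d + ε + (d - β + ε) * u10)) 0 :=
      ((hasDerivAt_id (0:ℝ)).neg).mul_const _
    have := h.deriv
    simp only [K1r]
    rw [this]; show -1 * (d + ε + (d - β + ε) * u10) = lr; ring
  have h01 : deriv (fun u => K1r β d ε 0 u) u10 = 0 := by
    have : (fun u => K1r β d ε 0 u) = fun _ : ℝ => (0:ℝ) := by
      funext u; simp [K1r]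
    rw [this, deriv_const]
  have h11 : deriv (fun u => K1u α θ β d ε 0 u) u10 = lu := by
    have hfun : (fun u => K1u α θ β d ε 0 u)
        = fun u : ℝ => (1 + u) * (α * ε * θ + (d - β + α * ε) * u) := by
      funext u; simp [K1u]
    have h : HasDerivAt (fun u : ℝ => (1 + u) * (α * ε * θ + (d - β + α * ε) * u))
        ((0 + 1) * (α * ε * θ + (d - β + α * ε) * u10)
          + (1 + u10) * (0 + (d - β + α * ε) * 1)) u10 := by
      exact ((hasDerivAt_const u10 (1:ℝ)).add (hasDerivAt_id u10)).mul
        (((hasDerivAt_const u10 (α * ε * θ))).add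
          (((hasDerivAt_id u10)).const_mul (d - β + α * ε)))
    rw [hfun, h.deriv, hEq]
    show (0 + 1) * 0 + (1 + u10) * (0 + (d - β + α * ε) * 1) = lu
    ring
  rw [h00, h01, h11]
  refine ⟨hu10, charpoly_tri _ _ _, ?_, ?_⟩
  · show -(d + ε + (d + ε - β) * u10) < 0
    have h1 : (d + ε - β) * u10 ≥ -(β - d) * u10 - ε * u10 := by nlinarith
    have h2 : (β - d) * u10 ≤ 2 * (ε * α) := by nlinarith [hu10b]
    have h3 : 2 * (ε * α) < d := by
      have h := hαε
      rw [lt_div_iff₀ (by positivity : (0:ℝ) < 2 * β)] at h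
      nlinarith
    nlinarith [mul_nonneg hε.le hu10]
  · show (1 + u10) * (d + α * ε - β) < 0
    have : d + α * ε - β < 0 := by nlinarith
    nlinarith
end

section
/- In chart K₂ of the blow-up (u = r₂, v = r₂v₂), the Jacobian of the desingularized system at (r₂,v₂) = (0,0) is diagonal with eigenvalues λ_r = ε(α−1) and λ_v = β − d − αε. Hence for β − d − αε > 0: if α > 1 the origin is a hyperbolic source, and if 0 < α < 1 it is a hyperbolic saddle. -/
/-- Chart K₂ desingularized vector field: r₂-component. -/
noncomputable def K2r (α θ β ε : ℝ) (r v : ℝ) : ℝ :=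
  r * (-(α * ε) * (1 + v) * (1 + θ * v) * (r * v + r - 1) - β * v - ε * (1 + v))

/-- Chart K₂ desingularized vector field: v₂-component. -/
noncomputable def K2v (α θ β d ε : ℝ) (r v : ℝ) : ℝ :=
  v * (α * ε * (1 + v) * (1 + θ * v) * (r * v + r - 1) + β * v + β - d * (1 + v))

/-!
Both components have the form `x * g(r, v)` with `x` the variable of that component, so each
coordinate axis is invariant: the off-diagonal entries of the Jacobian at the origin vanish, and
the diagonal entries are the factors `g` evaluated at the origin.
-/

theorem deriv_id_mul_at_zero {𝕜 : Type*} [NontriviallyNormedField 𝕜] {g : 𝕜 → 𝕜}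
    (hg : DifferentiableAt 𝕜 g 0) : deriv (fun x => x * g x) 0 = g 0 := by
  simpa using ((hasDerivAt_id (0 : 𝕜)).fun_mul hg.hasDerivAt).deriv

section ChartK2

variable (α θ β d ε : ℝ)

theorem K2r_zero_left (v : ℝ) : K2r α θ β ε 0 v = 0 :=
  zero_mul _

theorem K2v_zero_right (r : ℝ) : K2v α θ β d ε r 0 = 0 :=
  zero_mul _

theorem deriv_K2r_left_origin : deriv (fun r => K2r α θ β ε r 0) 0 = ε * (α - 1) := by
  unfold K2r
  rw [deriv_id_mul_at_zero (by fun_prop)]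
  ring

theorem deriv_K2r_right_origin : deriv (fun v => K2r α θ β ε 0 v) 0 = 0 := by
  simp only [K2r_zero_left, deriv_const]

theorem deriv_K2v_left_origin : deriv (fun r => K2v α θ β d ε r 0) 0 = 0 := by
  simp only [K2v_zero_right, deriv_const]

theorem deriv_K2v_right_origin :
    deriv (fun v => K2v α θ β d ε 0 v) 0 = β - d - α * ε := by
  unfold K2v
  rw [deriv_id_mul_at_zero (by fun_prop)]
  ring

end ChartK2

theorem chartK2_origin_general (α θ β d ε : ℝ)
    (hε : 0 < ε)
    (hβd : 0 < β - d - α * ε) :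
    (!![deriv (fun r => K2r α θ β ε r 0) 0,
        deriv (fun v => K2r α θ β ε 0 v) 0;
        deriv (fun r => K2v α θ β d ε r 0) 0,
        deriv (fun v => K2v α θ β d ε 0 v) 0])
      = !![ε * (α - 1), 0; 0, β - d - α * ε] ∧
    (1 < α → 0 < ε * (α - 1) ∧ 0 < β - d - α * ε) ∧
    (α < 1 → ε * (α - 1) < 0 ∧ 0 < β - d - α * ε) := by
  refine ⟨?_, fun h => ⟨mul_pos hε (sub_pos.2 h), hβd⟩,
    fun h => ⟨mul_neg_of_pos_of_neg hε (sub_neg.2 h), hβd⟩⟩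
  rw [deriv_K2r_left_origin, deriv_K2r_right_origin, deriv_K2v_left_origin,
    deriv_K2v_right_origin]

/-- In chart K₂: the Jacobian at the origin is diagonal with eigenvalues
λ_r = ε(α−1) and λ_v = β − d − αε. Hence for β − d − αε > 0: if α > 1 the origin
is a hyperbolic source, and if 0 < α < 1 a hyperbolic saddle. -/
theorem chartK2_origin (α θ β d ε : ℝ)
    (hα : 0 < α) (hβ : 0 < β) (hd : 0 < d) (hε : 0 < ε)
    (hθ0 : 0 ≤ θ) (hθ1 : θ ≤ 1)
    (hβd : 0 < β - d - α * ε) :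
    (!![deriv (fun r => K2r α θ β ε r 0) 0,
        deriv (fun v => K2r α θ β ε 0 v) 0;
        deriv (fun r => K2v α θ β d ε r 0) 0,
        deriv (fun v => K2v α θ β d ε 0 v) 0])
      = !![ε * (α - 1), 0; 0, β - d - α * ε] ∧
    (1 < α → 0 < ε * (α - 1) ∧ 0 < β - d - α * ε) ∧
    (α < 1 → ε * (α - 1) < 0 ∧ 0 < β - d - α * ε) :=
  chartK2_origin_general α θ β d ε hε hβd
end

section
/- At the interior equilibrium (u₃,x₃) = (1−k/α, (k−1)(α−k)/(αd)) of the system u' = −u(αu² − αu + dx + u), x' = x((k−1)u − dx), the trace of the Jacobian equals −(α−k)²/α < 0 and the determinant equals (α−k)³(k−1)/α² > 0; hence both eigenvalues have negative real part and the equilibrium is locally asymptotically stable. -/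
noncomputable def F16 (α d : ℝ) (u x : ℝ) : ℝ :=
  -u * (α * u ^ 2 - α * u + d * x + u)

noncomputable def G16 (d k : ℝ) (u x : ℝ) : ℝ :=
  x * ((k - 1) * u - d * x)

lemma charpoly_fin2 (M : Matrix (Fin 2) (Fin 2) ℂ) :
    M.charpoly = Polynomial.X ^ 2 - Polynomial.C M.trace * Polynomial.X + Polynomial.C M.det := by
  rw [Matrix.charpoly, Matrix.det_fin_two]
  rw [Matrix.charmatrix_apply_eq, Matrix.charmatrix_apply_eq,
    Matrix.charmatrix_apply_ne _ _ _ (by decide), Matrix.charmatrix_apply_ne _ _ _ (by decide),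
    Matrix.trace_fin_two, Matrix.det_fin_two]
  simp only [map_add, map_mul, map_sub]
  ring

/-- At the interior equilibrium (1−k/α, (k−1)(α−k)/(αd)), the Jacobian J₃ has
trace −(α−k)²/α < 0 and determinant (α−k)³(k−1)/α² > 0, so both eigenvalues
have negative real part: the equilibrium is locally asymptotically stable. -/
theorem interior_equilibrium_stable (α d k : ℝ)
    (hα : 1 < α) (hd : 0 < d) (hk1 : 1 < k) (hkα : k < α) :
    let J₃ : Matrix (Fin 2) (Fin 2) ℝ :=
      !![-(α - 2 * k + 1) * (α - k) / α, d * (k / α - 1);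
         (k - 1) ^ 2 * (α - k) / (α * d), -(k - 1) * (α - k) / α]
    F16 α d (1 - k / α) ((k - 1) * (α - k) / (α * d)) = 0 ∧
    G16 d k (1 - k / α) ((k - 1) * (α - k) / (α * d)) = 0 ∧
    Matrix.trace J₃ = -(α - k) ^ 2 / α ∧
    J₃.det = (α - k) ^ 3 * (k - 1) / α ^ 2 ∧
    -(α - k) ^ 2 / α < 0 ∧ 0 < (α - k) ^ 3 * (k - 1) / α ^ 2 ∧
    (∀ μ : ℂ, (J₃.map (Complex.ofReal)).charpoly.IsRoot μ → μ.re < 0) := by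
  intro J₃
  have hα0 : α ≠ 0 := by linarith
  have hd0 : d ≠ 0 := ne_of_gt hd
  have htr : Matrix.trace J₃ = -(α - k) ^ 2 / α := by
    simp only [J₃, Matrix.trace_fin_two_of]
    field_simp
    ring
  have hdet : J₃.det = (α - k) ^ 3 * (k - 1) / α ^ 2 := by
    simp only [J₃, Matrix.det_fin_two_of]
    field_simp
    ring
  have htneg : -(α - k) ^ 2 / α < 0 :=
    div_neg_of_neg_of_pos (by nlinarith) (by linarith)
  have hdpos : 0 < (α - k) ^ 3 * (k - 1) / α ^ 2 :=
    div_pos (mul_pos (pow_pos (by linarith) 3) (by linarith)) (by positivity)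
  refine ⟨?_, ?_, htr, hdet, htneg, hdpos, ?_⟩
  · unfold F16; field_simp; ring
  · unfold G16; field_simp; ring
  · intro μ hμ
    set t : ℝ := -(α - k) ^ 2 / α with ht
    set D : ℝ := (α - k) ^ 3 * (k - 1) / α ^ 2 with hD
    have hMt : (J₃.map Complex.ofReal).trace = (t : ℂ) := by
      rw [← htr]
      simp [Matrix.trace_fin_two, Matrix.map_apply]
    have hMd : (J₃.map Complex.ofReal).det = (D : ℂ) := by
      rw [← hdet]
      simp only [Matrix.det_fin_two, Matrix.map_apply]
      push_cast
      ring
    rw [charpoly_fin2, hMt, hMd, Polynomial.IsRoot] at hμ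
    simp only [Polynomial.eval_add, Polynomial.eval_sub, Polynomial.eval_mul,
      Polynomial.eval_pow, Polynomial.eval_X, Polynomial.eval_C] at hμ
    have heq : μ ^ 2 - (t : ℂ) * μ + (D : ℂ) = 0 := hμ
    rw [Complex.ext_iff] at heq
    simp only [pow_two, Complex.add_re, Complex.add_im, Complex.sub_re, Complex.sub_im,
      Complex.mul_re, Complex.mul_im, Complex.ofReal_re, Complex.ofReal_im,
      Complex.zero_re, Complex.zero_im] at heq
    obtain ⟨h1, h2⟩ := heq
    set a := μ.re
    set b := μ.im
    by_contra h
    push_neg at h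
    have hb : b = 0 := by
      have : b * (2 * a - t) = 0 := by linarith [h2]
      rcases mul_eq_zero.1 this with hb | hb
      · exact hb
      · nlinarith
    nlinarith [sq_nonneg a]
end
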